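/- Let δ, ξ, ω₁, ω₂ > 0 and let Ξ : ℝ² → ℝ be a C¹ map taking the constant value C on the unit circle. Define Υ(s,φ) = Ξ(M(s)cos W(s,φ), M(s)sin W(s,φ)) − (ξω₁/δ)·ln(1−s) with M(s) = 1 − (1−s)^{1/δ}, W(s,φ) = φ + (ξω₂/δ)ln(1−s), and h(s,φ) = 1 − exp(−(δ/(ξω₁))·Υ(s,φ)) for s ∈ [0,1), φ ∈ ℝ. Then, uniformly in φ ∈ ℝ: (i) ∂h/∂s(s,φ) → exp(−δC/(ξω₁)) ≠ 0 as s → 1⁻, and (ii) ∂h/∂φ(s,φ) → 0 as s → 1⁻. -/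

import Mathlib

/-!
Write `k = δ/(ξω₁)`. Since `exp(-kΥ) = (1 - s) exp(-kΞ(M cos W, M sin W))`, the chain rule gives
`∂h/∂s = E (1 + k (δ⁻¹ (1 - s)^{1/δ} ∂ᵣΞ - (ξω₂/δ) M ∂_τΞ))` and `∂h/∂φ = (1 - s) k E M ∂_τΞ`,
where `E = exp(-kΞ)` and `∂ᵣ`, `∂_τ` are the radial and unit tangential derivatives: the factor
`1 - s` cancels the logarithmic singularity of `∂W/∂s`. As `s → 1⁻` the point
`(M cos W, M sin W)` approaches the unit circle uniformly in `φ`, so by uniform continuity of `Ξ`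
and `DΞ` on a compact disc, `E → exp(-kC)` and `∂_τΞ` tends to its value on the circle, which is
`0` because `Ξ` is constant there; meanwhile `∂ᵣΞ` stays bounded.
-/

open Real Set Filter Topology Function Uniformity

noncomputable def polar (r θ : ℝ) : ℝ × ℝ := (r * cos θ, r * sin θ)

lemma polar_sub_polar (r r' θ : ℝ) : polar r θ - polar r' θ = (r - r') • (cos θ, sin θ) := by
  ext <;> simp [polar] <;> ring

lemma norm_cos_sin_le_one (θ : ℝ) : ‖((cos θ, sin θ) : ℝ × ℝ)‖ ≤ 1 := by
  simpa [Prod.norm_def] using ⟨abs_cos_le_one θ, abs_sin_le_one θ⟩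

lemma norm_neg_sin_cos_le_one (θ : ℝ) : ‖((-sin θ, cos θ) : ℝ × ℝ)‖ ≤ 1 := by
  simpa [Prod.norm_def] using ⟨abs_sin_le_one θ, abs_cos_le_one θ⟩

lemma dist_polar_le (r r' θ : ℝ) : dist (polar r θ) (polar r' θ) ≤ |r - r'| := by
  rw [dist_eq_norm, polar_sub_polar, norm_smul, Real.norm_eq_abs]
  exact mul_le_of_le_one_right (abs_nonneg _) (norm_cos_sin_le_one θ)

lemma polar_mem_closedBall {r R : ℝ} (h : |r| ≤ R) (θ : ℝ) :
    polar r θ ∈ Metric.closedBall (0 : ℝ × ℝ) R := by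
  have h0 : polar 0 θ = 0 := by simp [polar]
  simpa [h0] using (dist_polar_le r 0 θ).trans (by simpa using h)

section

variable {ι E : Type*} [NormedAddCommGroup E] {l : Filter ι} {r θ : ι → ℝ} {ρ : ℝ}

lemma eventually_polar_mem_closedBall (hr : Tendsto r l (𝓝 ρ)) :
    ∀ᶠ i in l, polar (r i) (θ i) ∈ Metric.closedBall (0 : ℝ × ℝ) (|ρ| + 1) := by
  filter_upwards [hr.eventually (Metric.ball_mem_nhds ρ one_pos)] with i hi
  rw [Real.dist_eq] at hi
  exact polar_mem_closedBall (by linarith [abs_sub_abs_le_abs_sub (r i) ρ]) _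

lemma tendsto_sub_comp_polar {F : ℝ × ℝ → E} (hF : Continuous F) (hr : Tendsto r l (𝓝 ρ)) :
    Tendsto (fun i => F (polar (r i) (θ i)) - F (polar ρ (θ i))) l (𝓝 0) := by
  set K := Metric.closedBall (0 : ℝ × ℝ) (|ρ| + 1)
  have hFK : UniformContinuousOn F K :=
    (isCompact_closedBall _ _).uniformContinuousOn_of_continuous hF.continuousOn
  have hdist : Tendsto (fun i => dist (polar (r i) (θ i)) (polar ρ (θ i))) l (𝓝 0) :=
    squeeze_zero (fun _ => dist_nonneg) (fun i => dist_polar_le _ _ _)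
      (by simpa using (hr.sub_const ρ).abs)
  have hpairs : Tendsto (fun i => (polar (r i) (θ i), polar ρ (θ i))) l
      (𝓤 (ℝ × ℝ) ⊓ 𝓟 (K ×ˢ K)) :=
    tendsto_inf.2 ⟨tendsto_uniformity_iff_dist_tendsto_zero.2 hdist,
      tendsto_principal.2 ((eventually_polar_mem_closedBall hr).mono fun i hi =>
        ⟨hi, polar_mem_closedBall (by linarith) _⟩)⟩
  rw [tendsto_zero_iff_norm_tendsto_zero]
  simpa [dist_eq_norm] using
    tendsto_uniformity_iff_dist_tendsto_zero.1 (Tendsto.comp hFK hpairs)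

lemma isBoundedUnder_norm_comp_polar {F : ℝ × ℝ → E} (hF : Continuous F)
    (hr : Tendsto r l (𝓝 ρ)) : IsBoundedUnder (· ≤ ·) l (fun i => ‖F (polar (r i) (θ i))‖) := by
  obtain ⟨B, hB⟩ :=
    (isCompact_closedBall (0 : ℝ × ℝ) (|ρ| + 1)).exists_bound_of_continuousOn hF.continuousOn
  exact isBoundedUnder_of_eventually_le ((eventually_polar_mem_closedBall hr).mono fun i hi =>
    hB _ hi)

end

noncomputable def radialDeriv (Ξ : ℝ × ℝ → ℝ) (r θ : ℝ) : ℝ :=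
  fderiv ℝ Ξ (polar r θ) (cos θ, sin θ)

noncomputable def angularDeriv (Ξ : ℝ × ℝ → ℝ) (r θ : ℝ) : ℝ :=
  fderiv ℝ Ξ (polar r θ) (-sin θ, cos θ)

lemma hasDerivAt_comp_polar {Ξ : ℝ × ℝ → ℝ} {r θ : ℝ → ℝ} {r' θ' t : ℝ}
    (hΞ : DifferentiableAt ℝ Ξ (polar (r t) (θ t))) (hr : HasDerivAt r r' t)
    (hθ : HasDerivAt θ θ' t) :
    HasDerivAt (fun t => Ξ (polar (r t) (θ t)))
      (r' * radialDeriv Ξ (r t) (θ t) + r t * θ' * angularDeriv Ξ (r t) (θ t)) t := by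
  have hpolar : HasDerivAt (fun t => polar (r t) (θ t))
      (r' • (cos (θ t), sin (θ t)) + (r t * θ') • (-sin (θ t), cos (θ t))) t := by
    refine ((hr.mul hθ.cos).prodMk (hr.mul hθ.sin)).congr_deriv ?_
    ext <;> simp <;> ring
  refine (hΞ.hasFDerivAt.comp_hasDerivAt t hpolar).congr_deriv ?_
  rw [map_add, map_smul, map_smul]
  rfl

lemma angularDeriv_one_eq_zero {Ξ : ℝ × ℝ → ℝ} {C θ : ℝ}
    (hΞ : DifferentiableAt ℝ Ξ (polar 1 θ)) (hconst : ∀ θ, Ξ (polar 1 θ) = C) :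
    angularDeriv Ξ 1 θ = 0 := by
  have h : HasDerivAt (fun t => Ξ (polar 1 t))
      (0 * radialDeriv Ξ 1 θ + 1 * 1 * angularDeriv Ξ 1 θ) θ :=
    hasDerivAt_comp_polar (r := fun _ => 1) (θ := id) hΞ (hasDerivAt_const θ 1) (hasDerivAt_id θ)
  simp only [hconst, zero_mul, one_mul, zero_add] at h
  exact h.unique (hasDerivAt_const θ C)

section

variable {ι : Type*} {l : Filter ι} {r θ : ι → ℝ} {Ξ : ℝ × ℝ → ℝ} {C : ℝ}

lemma tendsto_comp_polar_of_eq_on_circle (hΞ : Continuous Ξ) (hconst : ∀ θ, Ξ (polar 1 θ) = C)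
    (hr : Tendsto r l (𝓝 1)) : Tendsto (fun i => Ξ (polar (r i) (θ i))) l (𝓝 C) := by
  simpa [hconst] using (tendsto_sub_comp_polar (θ := θ) hΞ hr).add_const C

lemma tendsto_angularDeriv (hΞ : ContDiff ℝ 1 Ξ) (hconst : ∀ θ, Ξ (polar 1 θ) = C)
    (hr : Tendsto r l (𝓝 1)) : Tendsto (fun i => angularDeriv Ξ (r i) (θ i)) l (𝓝 0) := by
  refine squeeze_zero_norm (fun i => ?_) (tendsto_norm_zero.comp
    (tendsto_sub_comp_polar (θ := θ) (hΞ.continuous_fderiv one_ne_zero) hr))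
  have h0 := angularDeriv_one_eq_zero (θ := θ i) (hΞ.differentiable one_ne_zero _) hconst
  calc ‖angularDeriv Ξ (r i) (θ i)‖
      = ‖(fderiv ℝ Ξ (polar (r i) (θ i)) - fderiv ℝ Ξ (polar 1 (θ i)))
          (-sin (θ i), cos (θ i))‖ := by
        rw [sub_apply, ← angularDeriv, ← angularDeriv, h0, sub_zero]
    _ ≤ _ := ((ContinuousLinearMap.le_opNorm_of_le _ (norm_neg_sin_cos_le_one _)).trans_eq
        (mul_one _))

lemma isBoundedUnder_radialDeriv (hΞ : ContDiff ℝ 1 Ξ) {ρ : ℝ} (hr : Tendsto r l (𝓝 ρ)) :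
    IsBoundedUnder (· ≤ ·) l (fun i => ‖radialDeriv Ξ (r i) (θ i)‖) :=
  (isBoundedUnder_norm_comp_polar (hΞ.continuous_fderiv one_ne_zero) hr).mono_le
    (Eventually.of_forall fun _ => (ContinuousLinearMap.le_opNorm_of_le _
      (norm_cos_sin_le_one _)).trans_eq (mul_one _))

end

lemma eventually_fst_lt {β : Type*} (a : ℝ) (l : Filter β) : ∀ᶠ q : ℝ × β in 𝓝[<] a ×ˢ l, q.1 < a :=
  eventually_mem_nhdsWithin.prod_inl l

namespace Spiral

/- `radius`, `angle` and `profile` are `M`, `W` and `h` of the paper with `a = 1/δ`,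
`b = ξω₂/δ`, `k = δ/(ξω₁)`; `profile` is `h` rewritten by `exp(-kΥ) = (1 - s) exp(-kΞ)`. -/

noncomputable def radius (a s : ℝ) : ℝ := 1 - (1 - s) ^ a

noncomputable def angle (b s φ : ℝ) : ℝ := φ + b * log (1 - s)

noncomputable def profile (Ξ : ℝ × ℝ → ℝ) (k a b s φ : ℝ) : ℝ :=
  1 - (1 - s) * exp (-k * Ξ (polar (radius a s) (angle b s φ)))

variable (Ξ : ℝ × ℝ → ℝ) (k a b : ℝ)

lemma one_sub_exp_eq_profile (hk : k ≠ 0) {s : ℝ} (hs : s < 1) (φ : ℝ) :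
    1 - exp (-k * (Ξ (polar (radius a s) (angle b s φ)) - k⁻¹ * log (1 - s))) =
      profile Ξ k a b s φ := by
  have hexponent : ∀ X : ℝ, -k * (X - k⁻¹ * log (1 - s)) = -k * X + log (1 - s) := fun X => by
    field_simp
    ring
  rw [profile, hexponent, exp_add, exp_log (by linarith), mul_comm]

lemma hasDerivAt_radius {s : ℝ} (hs : s < 1) :
    HasDerivAt (radius a) (a * (1 - s) ^ (a - 1)) s := by
  have h := (((hasDerivAt_id s).const_sub 1).rpow_const (p := a)
    (Or.inl (by simp; linarith))).const_sub 1
  exact h.congr_deriv (by simp)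

lemma hasDerivAt_angle_fst {s : ℝ} (hs : s < 1) (φ : ℝ) :
    HasDerivAt (angle b · φ) (-b / (1 - s)) s := by
  have h := ((((hasDerivAt_id s).const_sub 1).log (by simp; linarith)).const_mul b).const_add φ
  exact h.congr_deriv (by simp; ring)

lemma hasDerivAt_angle_snd (s φ : ℝ) : HasDerivAt (angle b s) 1 φ :=
  (hasDerivAt_id φ).add_const _

lemma hasDerivAt_profile_fst (hΞ : Differentiable ℝ Ξ) {s : ℝ} (hs : s < 1) (φ : ℝ) :
    HasDerivAt (profile Ξ k a b · φ)
      (exp (-k * Ξ (polar (radius a s) (angle b s φ))) *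
        (1 + k * (a * (1 - s) ^ a * radialDeriv Ξ (radius a s) (angle b s φ)
          - b * radius a s * angularDeriv Ξ (radius a s) (angle b s φ)))) s := by
  have hΞs := hasDerivAt_comp_polar (hΞ _) (hasDerivAt_radius a hs) (hasDerivAt_angle_fst b hs φ)
  refine ((((hasDerivAt_id s).const_sub 1).mul (hΞs.const_mul (-k)).exp).const_sub 1).congr_deriv
    ?_
  have hs' : 1 - s ≠ 0 := by linarith
  rw [rpow_sub_one hs', id]
  field_simp
  ring

lemma hasDerivAt_profile_snd (hΞ : Differentiable ℝ Ξ) (s φ : ℝ) :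
    HasDerivAt (profile Ξ k a b s)
      ((1 - s) * exp (-k * Ξ (polar (radius a s) (angle b s φ))) * k * radius a s *
        angularDeriv Ξ (radius a s) (angle b s φ)) φ := by
  have hΞφ := hasDerivAt_comp_polar (r := fun _ => radius a s) (hΞ _) (hasDerivAt_const φ _)
    (hasDerivAt_angle_snd b s φ)
  refine (((hΞφ.const_mul (-k)).exp.const_mul (1 - s)).const_sub 1).congr_deriv ?_
  ring

variable {Ξ a} {C : ℝ}

lemma tendsto_radius_fst (ha : 0 < a) :
    Tendsto (fun q : ℝ × ℝ => radius a q.1) (𝓝[<] 1 ×ˢ ⊤) (𝓝 1) := by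
  have hcont : Continuous (radius a) :=
    continuous_const.sub ((continuous_const.sub continuous_id).rpow_const fun _ => Or.inr ha.le)
  have h1 : Tendsto (radius a) (𝓝 1) (𝓝 1) := by
    simpa [radius, zero_rpow ha.ne'] using hcont.tendsto 1
  exact h1.comp (tendsto_fst.mono_right nhdsWithin_le_nhds)

lemma tendsto_exp_neg_mul_comp_polar (hΞ : Continuous Ξ) (hconst : ∀ θ, Ξ (polar 1 θ) = C)
    (ha : 0 < a) :
    Tendsto (fun q : ℝ × ℝ => exp (-k * Ξ (polar (radius a q.1) (angle b q.1 q.2))))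
      (𝓝[<] 1 ×ˢ ⊤) (𝓝 (exp (-k * C))) :=
  ((tendsto_comp_polar_of_eq_on_circle hΞ hconst (tendsto_radius_fst ha)).const_mul (-k)).rexp

lemma tendsto_deriv_profile_fst (hΞ : ContDiff ℝ 1 Ξ) (hconst : ∀ θ, Ξ (polar 1 θ) = C)
    (ha : 0 < a) :
    Tendsto (fun q : ℝ × ℝ => deriv (profile Ξ k a b · q.2) q.1) (𝓝[<] 1 ×ˢ ⊤)
      (𝓝 (exp (-k * C))) := by
  have hr := tendsto_radius_fst (a := a) ha
  have hpow : Tendsto (fun q : ℝ × ℝ => a * (1 - q.1) ^ a) (𝓝[<] 1 ×ˢ ⊤) (𝓝 0) := by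
    simpa [radius] using ((tendsto_const_nhds (x := (1 : ℝ))).sub hr).const_mul a
  have hradial := hpow.zero_mul_isBoundedUnder_le
    (isBoundedUnder_radialDeriv (θ := fun q => angle b q.1 q.2) hΞ hr)
  have hangular := (hr.const_mul b).mul
    (tendsto_angularDeriv (θ := fun q => angle b q.1 q.2) hΞ hconst hr)
  have h := (tendsto_exp_neg_mul_comp_polar k b hΞ.continuous hconst ha).mul
    (((hradial.sub hangular).const_mul k).const_add 1)
  rw [mul_zero, sub_zero, mul_zero, add_zero, mul_one] at h
  refine h.congr' ?_
  filter_upwards [eventually_fst_lt 1 ⊤] with q hq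
  exact ((hasDerivAt_profile_fst Ξ k a b (hΞ.differentiable one_ne_zero) hq q.2).deriv).symm

lemma tendsto_deriv_profile_snd (hΞ : ContDiff ℝ 1 Ξ) (hconst : ∀ θ, Ξ (polar 1 θ) = C)
    (ha : 0 < a) :
    Tendsto (fun q : ℝ × ℝ => deriv (profile Ξ k a b q.1) q.2) (𝓝[<] 1 ×ˢ ⊤) (𝓝 0) := by
  have hr := tendsto_radius_fst (a := a) ha
  have h1s : Tendsto (fun q : ℝ × ℝ => 1 - q.1) (𝓝[<] 1 ×ˢ ⊤) (𝓝 0) := by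
    simpa using (tendsto_const_nhds (x := (1 : ℝ))).sub
      (tendsto_fst.mono_right (nhdsWithin_le_nhds (a := (1 : ℝ)) (s := Iio 1)))
  have hE := tendsto_exp_neg_mul_comp_polar k b hΞ.continuous hconst ha
  have h := (((h1s.mul hE).mul_const k).mul hr).mul
    (tendsto_angularDeriv (θ := fun q => angle b q.1 q.2) hΞ hconst hr)
  rw [mul_zero] at h
  simpa only [(hasDerivAt_profile_snd Ξ k a b (hΞ.differentiable one_ne_zero) _ _).deriv]
    using h

end Spiral

lemma exists_Ioo_forall_abs_sub_lt {F : ℝ → ℝ → ℝ} {c : ℝ}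
    (h : Tendsto ↿F (𝓝[<] 1 ×ˢ ⊤) (𝓝 c)) {η : ℝ} (hη : 0 < η) :
    ∃ s₀ ∈ Ioo (0 : ℝ) 1, ∀ s ∈ Ioo s₀ 1, ∀ φ, |F s φ - c| < η := by
  obtain ⟨t, ht, hF⟩ := (nhdsLT_basis (1 : ℝ)).eventually_iff.1
    (Metric.tendstoUniformly_iff.1 (tendsto_prod_top_iff.1 h) η hη)
  refine ⟨max t (1 / 2), ⟨by positivity, max_lt ht (by norm_num)⟩, fun s hs φ => ?_⟩
  rw [← Real.dist_eq, dist_comm]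
  exact hF ⟨(le_max_left _ _).trans_lt hs.1, hs.2⟩ φ

theorem stmt_13_general (δ ξ ω₁ ω₂ C : ℝ) (hδ : 0 < δ) (hξ : 0 < ξ) (hω₁ : 0 < ω₁)
    (Ξ : ℝ × ℝ → ℝ) (hΞ : ContDiff ℝ 1 Ξ)
    (hconst : ∀ p : ℝ × ℝ, p.1 ^ 2 + p.2 ^ 2 = 1 → Ξ p = C)
    (M : ℝ → ℝ) (W : ℝ → ℝ → ℝ) (Υ : ℝ → ℝ → ℝ) (hfun : ℝ → ℝ → ℝ)
    (hM : ∀ s : ℝ, M s = 1 - (1 - s) ^ (1 / δ))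
    (hW : ∀ s φ : ℝ, W s φ = φ + (ξ * ω₂ / δ) * Real.log (1 - s))
    (hΥ : ∀ s φ : ℝ, Υ s φ =
      Ξ (M s * Real.cos (W s φ), M s * Real.sin (W s φ))
        - (ξ * ω₁ / δ) * Real.log (1 - s))
    (hh : ∀ s φ : ℝ, hfun s φ = 1 - Real.exp (-(δ / (ξ * ω₁)) * Υ s φ)) :
    Real.exp (-(δ * C) / (ξ * ω₁)) ≠ 0 ∧
    (∀ η > (0 : ℝ), ∃ s₀ ∈ Set.Ioo (0 : ℝ) 1, ∀ s ∈ Set.Ioo s₀ 1, ∀ φ : ℝ,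
      |deriv (fun s' => hfun s' φ) s - Real.exp (-(δ * C) / (ξ * ω₁))| < η) ∧
    (∀ η > (0 : ℝ), ∃ s₀ ∈ Set.Ioo (0 : ℝ) 1, ∀ s ∈ Set.Ioo s₀ 1, ∀ φ : ℝ,
      |deriv (fun φ' => hfun s φ') φ| < η) := by
  obtain rfl : M = Spiral.radius (1 / δ) := funext hM
  obtain rfl : W = Spiral.angle (ξ * ω₂ / δ) := funext₂ hW
  have hprofile : ∀ s < 1, hfun s = Spiral.profile Ξ (δ / (ξ * ω₁)) (1 / δ) (ξ * ω₂ / δ) s :=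
    fun s hs => funext fun φ => by
      rw [hh, hΥ, ← inv_div δ (ξ * ω₁)]
      exact Spiral.one_sub_exp_eq_profile _ _ _ _ (by positivity) hs φ
  have hcircle : ∀ θ, Ξ (polar 1 θ) = C := fun θ => hconst _ (by simp [polar])
  have hlimit : -(δ * C) / (ξ * ω₁) = -(δ / (ξ * ω₁)) * C := by ring
  have hfst : Tendsto (fun q : ℝ × ℝ => deriv (hfun · q.2) q.1) (𝓝[<] 1 ×ˢ ⊤)
      (𝓝 (exp (-(δ * C) / (ξ * ω₁)))) := by
    rw [hlimit]
    refine (Spiral.tendsto_deriv_profile_fst (a := 1 / δ) _ (ξ * ω₂ / δ) hΞ hcircle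
      (by positivity)).congr' ?_
    filter_upwards [eventually_fst_lt 1 ⊤] with q hq
    refine EventuallyEq.deriv_eq ?_
    filter_upwards [Iio_mem_nhds hq] with s hs
    rw [hprofile s hs]
  have hsnd : Tendsto (fun q : ℝ × ℝ => deriv (hfun q.1) q.2) (𝓝[<] 1 ×ˢ ⊤) (𝓝 0) := by
    refine (Spiral.tendsto_deriv_profile_snd (a := 1 / δ) (δ / (ξ * ω₁)) (ξ * ω₂ / δ) hΞ hcircle
      (by positivity)).congr' ?_
    filter_upwards [eventually_fst_lt 1 ⊤] with q hq
    rw [hprofile q.1 hq]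
  exact ⟨exp_ne_zero _,
    fun η hη => exists_Ioo_forall_abs_sub_lt (F := fun s φ => deriv (hfun · φ) s) hfst hη,
    fun η hη => by simpa using exists_Ioo_forall_abs_sub_lt (F := fun s => deriv (hfun s)) hsnd hη⟩

/-- Claim 4 of Proposition 5.5: with `h(s,φ) = 1 − exp(−(δ/(ξω₁))Υ(s,φ))`,
uniformly in `φ ∈ ℝ`: (i) `∂h/∂s(s,φ) → exp(−δC/(ξω₁)) ≠ 0` as `s → 1⁻`,
and (ii) `∂h/∂φ(s,φ) → 0` as `s → 1⁻`. -/
theorem stmt_13 (δ ξ ω₁ ω₂ C : ℝ) (hδ : 0 < δ) (hξ : 0 < ξ) (hω₁ : 0 < ω₁) (hω₂ : 0 < ω₂)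
    (Ξ : ℝ × ℝ → ℝ) (hΞ : ContDiff ℝ 1 Ξ)
    (hconst : ∀ p : ℝ × ℝ, p.1 ^ 2 + p.2 ^ 2 = 1 → Ξ p = C)
    (M : ℝ → ℝ) (W : ℝ → ℝ → ℝ) (Υ : ℝ → ℝ → ℝ) (hfun : ℝ → ℝ → ℝ)
    (hM : ∀ s : ℝ, M s = 1 - (1 - s) ^ (1 / δ))
    (hW : ∀ s φ : ℝ, W s φ = φ + (ξ * ω₂ / δ) * Real.log (1 - s))
    (hΥ : ∀ s φ : ℝ, Υ s φ =
      Ξ (M s * Real.cos (W s φ), M s * Real.sin (W s φ))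
        - (ξ * ω₁ / δ) * Real.log (1 - s))
    (hh : ∀ s φ : ℝ, hfun s φ = 1 - Real.exp (-(δ / (ξ * ω₁)) * Υ s φ)) :
    Real.exp (-(δ * C) / (ξ * ω₁)) ≠ 0 ∧
    (∀ η > (0 : ℝ), ∃ s₀ ∈ Set.Ioo (0 : ℝ) 1, ∀ s ∈ Set.Ioo s₀ 1, ∀ φ : ℝ,
      |deriv (fun s' => hfun s' φ) s - Real.exp (-(δ * C) / (ξ * ω₁))| < η) ∧
    (∀ η > (0 : ℝ), ∃ s₀ ∈ Set.Ioo (0 : ℝ) 1, ∀ s ∈ Set.Ioo s₀ 1, ∀ φ : ℝ,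
      |deriv (fun φ' => hfun s φ') φ| < η) :=
  stmt_13_general δ ξ ω₁ ω₂ C hδ hξ hω₁ Ξ hΞ hconst M W Υ hfun hM hW hΥ hh
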